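/- arXiv:2412.14980 — 2 statements merged into one kernel-verified Lean document; each statement's English description precedes it below -/
import Mathlib

section
/- Let p be a prime with p ≥ 11, and let a, b be integers with p ∤ a, p ∤ b. Then the equation a·x³ + b·y³ = z³ has a solution (x, y, z) ∈ ℤₚ³ with not all coordinates zero. -/
/-!
Modulo `p` it suffices to solve `A x³ + B y³ = 1` over a finite field `F` with `q ≥ 8` elements. If
`3 ∤ q - 1`, cubing is a bijection of `F`. Otherwise fix a cubic character `χ`; the number of cube
roots of `u` is `1 + χ u + (χ u)²`, so counting solutions fibrewise over `A x³ = s`, `B y³ = 1 - s`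
gives `q` plus a combination of Jacobi sums `J(χⁱ, χʲ)` with unimodular coefficients. Two of them
equal `-1` and the other two have absolute value `√q`, so the count is at least `q - 2√q - 2 > 0`
(this is the Hasse–Weil bound for the cubic curve). A solution mod `p` has `z ≡ 1`, and Hensel's
lemma lifts the cube root of `a x³ + b y³ ≡ 1` since `p ≠ 3`.
-/

open Finset

namespace MulChar

open scoped Classical

variable {F : Type*} [Field F] {χ : MulChar F ℂ}

lemma apply_pow_three_eq_one (hχ : χ ^ 3 = 1) {u : F} (hu : u ≠ 0) : χ u ^ 3 = 1 := by
  rw [← pow_apply' χ three_ne_zero, hχ, one_apply hu.isUnit]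

lemma norm_apply_eq_one (hχ : χ ^ 3 = 1) {u : F} (hu : u ≠ 0) : ‖χ u‖ = 1 :=
  Complex.norm_eq_one_of_pow_eq_one (apply_pow_three_eq_one hχ hu) three_ne_zero

lemma one_add_apply_add_apply_sq (hχ : χ ^ 3 = 1) (u : F) :
    1 + χ u + χ u ^ 2 = ((if u = 0 then 1 else if χ u = 1 then 3 else 0 : ℕ) : ℂ) := by
  split_ifs with h0 h1
  · simp [h0]
  · rw [h1]; norm_num
  · have hfactor : (χ u - 1) * (1 + χ u + χ u ^ 2) = 0 := by
      linear_combination apply_pow_three_eq_one hχ h0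
    simpa [sub_eq_zero, h1] using hfactor

variable [Fintype F]

lemma card_filter_pow_three_le (hχ : χ ^ 3 = 1) (u : F) :
    #{x | x ^ 3 = u} ≤ if u = 0 then 1 else if χ u = 1 then 3 else 0 := by
  split_ifs with h0 h1
  · subst h0
    simpa using card_le_one.mpr fun x hx y hy => by simp_all
  · calc #{x | x ^ 3 = u}
        ≤ (Polynomial.X ^ 3 - Polynomial.C u).roots.toFinset.card := by
          refine card_le_card fun x hx => ?_
          simp_all [Polynomial.X_pow_sub_C_ne_zero three_pos]
      _ ≤ (Polynomial.X ^ 3 - Polynomial.C u).natDegree :=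
          (Multiset.toFinset_card_le _).trans (Polynomial.card_roots' _)
      _ = 3 := Polynomial.natDegree_X_pow_sub_C
  · refine (card_eq_zero.mpr (filter_eq_empty_iff.mpr fun x _ hx => h1 ?_)).le
    have hx0 : x ≠ 0 := by rintro rfl; exact h0 (by simpa using hx.symm)
    rw [← hx, map_pow, apply_pow_three_eq_one hχ hx0]

lemma sum_one_add_apply_add_apply_sq (hχ : orderOf χ = 3) :
    ∑ u : F, (1 + χ u + χ u ^ 2) = (Fintype.card F : ℂ) := by
  have hχ1 : χ ≠ 1 := by rintro rfl; simp at hχ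
  have hχ2 : χ ^ 2 ≠ 1 := pow_ne_one_of_lt_orderOf two_ne_zero (by omega)
  simp only [sum_add_distrib, sum_eq_zero_of_ne_one hχ1, ← pow_apply' χ two_ne_zero,
    sum_eq_zero_of_ne_one hχ2]
  simp

/-- Both sides of the pointwise bound `card_filter_pow_three_le` sum to `#F`, so it is an
equality. -/
lemma card_filter_pow_three_eq (hχ : orderOf χ = 3) (u : F) :
    (#{x | x ^ 3 = u} : ℂ) = 1 + χ u + χ u ^ 2 := by
  have hχ3 : χ ^ 3 = 1 := hχ ▸ pow_orderOf_eq_one χ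
  have hsum : ∑ u : F, #{x | x ^ 3 = u} =
      ∑ u : F, if u = 0 then 1 else if χ u = 1 then 3 else 0 := by
    have hcast : ((∑ u : F, if u = 0 then 1 else if χ u = 1 then 3 else 0 : ℕ) : ℂ) =
        Fintype.card F := by
      rw [Nat.cast_sum, ← sum_one_add_apply_add_apply_sq hχ]
      simp only [one_add_apply_add_apply_sq hχ3]
    calc ∑ u : F, #{x | x ^ 3 = u} = Fintype.card F :=
          (card_eq_sum_card_fiberwise fun x _ => mem_univ (x ^ 3)).symm
      _ = _ := by exact_mod_cast hcast.symm
  rw [one_add_apply_add_apply_sq hχ3, (sum_eq_sum_iff_of_le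
    fun u _ => card_filter_pow_three_le hχ3 u).mp hsum u (mem_univ u)]

lemma jacobiSum_inv_inv (χ φ : MulChar F ℂ) :
    jacobiSum χ⁻¹ φ⁻¹ = starRingEnd ℂ (jacobiSum χ φ) := by
  rw [← star_eq_inv, ← star_eq_inv, ← jacobiSum_ringHomComp]
  rfl

lemma norm_jacobiSum {φ : MulChar F ℂ} (hχ : χ ≠ 1) (hφ : φ ≠ 1) (hχφ : χ * φ ≠ 1) :
    ‖jacobiSum χ φ‖ = √(Fintype.card F) := by
  have hchar : ringChar ℂ ≠ ringChar F := by
    rw [ringChar.eq_zero]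
    exact (CharP.char_is_prime F (ringChar F)).ne_zero.symm
  have h := jacobiSum_mul_jacobiSum_inv hchar hχ hφ hχφ
  rw [jacobiSum_inv_inv, Complex.mul_conj, ← Complex.ofReal_natCast, Complex.ofReal_inj] at h
  rw [Complex.norm_def, h]

lemma jacobiSum_pow_two_eq_neg_one (hχ : χ ^ 3 = 1) (hχ1 : χ ≠ 1) :
    jacobiSum χ (χ ^ 2) = -1 := by
  have hinv : χ⁻¹ = χ ^ 2 := inv_eq_of_mul_eq_one_right (by rw [← pow_succ']; exact hχ)
  rw [← hinv, jacobiSum_nontrivial_inv hχ1,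
    val_neg_one_eq_one_of_odd_order (by decide) hχ]

lemma sum_one_add_add_sq_mul_one_add_add_sq (hχ : orderOf χ = 3) (a b : ℂ) :
    ∑ s : F, (1 + a * χ s + (a * χ s) ^ 2) * (1 + b * χ (1 - s) + (b * χ (1 - s)) ^ 2) =
      Fintype.card F + a * b * jacobiSum χ χ + a ^ 2 * b ^ 2 * jacobiSum (χ ^ 2) (χ ^ 2)
        - a * b ^ 2 - a ^ 2 * b := by
  have hχ3 : χ ^ 3 = 1 := hχ ▸ pow_orderOf_eq_one χ
  have hχ1 : χ ≠ 1 := by rintro rfl; simp at hχ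
  have hχ2 : χ ^ 2 ≠ 1 := pow_ne_one_of_lt_orderOf two_ne_zero (by omega)
  have hsum : ∀ ψ : MulChar F ℂ, ψ ≠ 1 → ∑ s : F, ψ (1 - s) = 0 := fun ψ hψ =>
    ((Equiv.subLeft 1).sum_comp ψ).trans (sum_eq_zero_of_ne_one hψ)
  have hJ : ∀ ψ ψ' : MulChar F ℂ, ∑ s : F, ψ s * ψ' (1 - s) = jacobiSum ψ ψ' :=
    fun _ _ => rfl
  have hexpand : ∀ s : F,
      (1 + a * χ s + (a * χ s) ^ 2) * (1 + b * χ (1 - s) + (b * χ (1 - s)) ^ 2) =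
        1 + a * χ s + a ^ 2 * (χ ^ 2) s + b * χ (1 - s) + b ^ 2 * (χ ^ 2) (1 - s)
          + a * b * (χ s * χ (1 - s)) + a * b ^ 2 * (χ s * (χ ^ 2) (1 - s))
          + a ^ 2 * b * ((χ ^ 2) s * χ (1 - s))
          + a ^ 2 * b ^ 2 * ((χ ^ 2) s * (χ ^ 2) (1 - s)) := fun s => by
    rw [pow_apply' χ two_ne_zero, pow_apply' χ two_ne_zero]
    ring
  simp only [hexpand, sum_add_distrib, ← mul_sum, hJ, sum_eq_zero_of_ne_one hχ1,
    sum_eq_zero_of_ne_one hχ2, hsum χ hχ1, hsum (χ ^ 2) hχ2,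
    jacobiSum_pow_two_eq_neg_one hχ3 hχ1, jacobiSum_comm (χ ^ 2) χ]
  simp only [sum_const, card_univ, nsmul_eq_mul, mul_one]
  ring

end MulChar

section FiniteField

open scoped Classical

variable {F : Type*} [Field F] [Fintype F]

lemma exists_pow_three_eq_of_not_dvd (h : ¬ 3 ∣ Fintype.card F - 1) (u : F) :
    ∃ x, x ^ 3 = u := by
  rcases eq_or_ne u 0 with rfl | hu
  · exact ⟨0, zero_pow three_ne_zero⟩
  have hcop : (Nat.card Fˣ).Coprime 3 := by
    rw [Nat.card_eq_fintype_card, Fintype.card_units]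
    exact (Nat.prime_three.coprime_iff_not_dvd.mpr h).symm
  obtain ⟨v, hv⟩ := (Nat.Coprime.pow_left_bijective hcop).surjective (Units.mk0 u hu)
  exact ⟨v, by simpa using congrArg Units.val hv⟩

lemma card_filter_mul_pow_three_eq {χ : MulChar F ℂ} (hχ : orderOf χ = 3) {C : F} (hC : C ≠ 0)
    (s : F) : (#{x | C * x ^ 3 = s} : ℂ) = 1 + χ C⁻¹ * χ s + (χ C⁻¹ * χ s) ^ 2 := by
  rw [← map_mul, ← MulChar.card_filter_pow_three_eq hχ]
  simp only [eq_inv_mul_iff_mul_eq₀ hC]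

lemma exists_mul_pow_three_add_mul_pow_three_eq_one_of_orderOf {χ : MulChar F ℂ}
    (hχ : orderOf χ = 3) (hF : 8 ≤ Fintype.card F) {A B : F} (hA : A ≠ 0) (hB : B ≠ 0) :
    ∃ x y, A * x ^ 3 + B * y ^ 3 = 1 := by
  have hχ3 : χ ^ 3 = 1 := hχ ▸ pow_orderOf_eq_one χ
  have hχ1 : χ ≠ 1 := by rintro rfl; simp at hχ
  have hχ2 : χ ^ 2 ≠ 1 := pow_ne_one_of_lt_orderOf two_ne_zero (by omega)
  have hχ4 : χ ^ 2 * χ ^ 2 = χ := by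
    rw [← pow_add, show 2 + 2 = 3 + 1 by rfl, pow_succ, hχ3, one_mul]
  set a := χ A⁻¹
  set b := χ B⁻¹
  set q := Fintype.card F
  have hN : ∑ s : F, #{x | A * x ^ 3 = s} * #{y | B * y ^ 3 = 1 - s} ≠ 0 := by
    intro h0
    have hsum := congrArg (Nat.cast : ℕ → ℂ) h0
    push_cast at hsum
    simp only [card_filter_mul_pow_three_eq hχ hA, card_filter_mul_pow_three_eq hχ hB,
      MulChar.sum_one_add_add_sq_mul_one_add_add_sq hχ] at hsum
    have hbound : (q : ℝ) ≤ 2 * √q + 2 := calc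
      (q : ℝ) = ‖a * b * jacobiSum χ χ + a ^ 2 * b ^ 2 * jacobiSum (χ ^ 2) (χ ^ 2)
          - a * b ^ 2 - a ^ 2 * b‖ := by
        rw [← norm_neg, show -_ = (q : ℂ) by linear_combination -hsum]; simp
      _ ≤ ‖a * b * jacobiSum χ χ‖ + ‖a ^ 2 * b ^ 2 * jacobiSum (χ ^ 2) (χ ^ 2)‖
          + ‖a * b ^ 2‖ + ‖a ^ 2 * b‖ := by
        grw [norm_sub_le, norm_sub_le, norm_add_le]
      _ = 2 * √q + 2 := by
        simp only [norm_mul, norm_pow, a, b, MulChar.norm_apply_eq_one hχ3 (inv_ne_zero hA),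
          MulChar.norm_apply_eq_one hχ3 (inv_ne_zero hB), MulChar.norm_jacobiSum hχ1 hχ1
          (by rwa [← sq]), MulChar.norm_jacobiSum hχ2 hχ2 (by rwa [hχ4])]
        ring
    have hq : (8 : ℝ) ≤ q := by exact_mod_cast hF
    nlinarith [Real.sq_sqrt (Nat.cast_nonneg q : (0 : ℝ) ≤ q), Real.sqrt_nonneg q]
  obtain ⟨s, -, hs⟩ := exists_ne_zero_of_sum_ne_zero hN
  obtain ⟨x, hx⟩ := card_ne_zero.mp (left_ne_zero_of_mul hs)
  obtain ⟨y, hy⟩ := card_ne_zero.mp (right_ne_zero_of_mul hs)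
  refine ⟨x, y, ?_⟩
  simp only [mem_filter, mem_univ, true_and] at hx hy
  rw [hx, hy, add_sub_cancel]

theorem exists_mul_pow_three_add_mul_pow_three_eq_one (hF : 8 ≤ Fintype.card F) {A B : F}
    (hA : A ≠ 0) (hB : B ≠ 0) : ∃ x y, A * x ^ 3 + B * y ^ 3 = 1 := by
  by_cases h3 : 3 ∣ Fintype.card F - 1
  · obtain ⟨χ, hχ⟩ := MulChar.exists_mulChar_orderOf F h3
      (Complex.isPrimitiveRoot_exp 3 three_ne_zero)
    exact exists_mul_pow_three_add_mul_pow_three_eq_one_of_orderOf hχ hF hA hB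
  · obtain ⟨x, hx⟩ := exists_pow_three_eq_of_not_dvd h3 A⁻¹
    exact ⟨x, 0, by rw [hx, mul_inv_cancel₀ hA]; ring⟩

end FiniteField

namespace PadicInt

variable {p : ℕ} [Fact p.Prime]

lemma norm_lt_one_iff_toZMod_eq_zero (x : ℤ_[p]) : ‖x‖ < 1 ↔ toZMod x = 0 := by
  rw [← RingHom.mem_ker, ker_toZMod, IsLocalRing.mem_maximalIdeal, mem_nonunits]

lemma exists_pow_eq_of_toZMod_eq_one {n : ℕ} (hn : ¬ p ∣ n) {c : ℤ_[p]} (hc : toZMod c = 1) :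
    ∃ z : ℤ_[p], z ^ n = c := by
  set f : Polynomial ℤ_[p] := Polynomial.X ^ n - Polynomial.C c
  have hderiv : ‖f.derivative.aeval (1 : ℤ_[p])‖ = 1 := by
    simpa [f, Polynomial.derivative_X_pow] using (Nat.Prime.coprime_iff_not_dvd Fact.out).mpr hn
  have hval : ‖f.aeval (1 : ℤ_[p])‖ < 1 := by
    simp [f, norm_lt_one_iff_toZMod_eq_zero, hc]
  obtain ⟨z, hz, -⟩ := hensels_lemma (F := f) (a := 1) (by rwa [hderiv, one_pow])
  exact ⟨z, sub_eq_zero.mp (by simpa [f] using hz)⟩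

end PadicInt

/-- Let `p` be a prime with `p ≥ 11`, and let `a, b` be integers with
`p ∤ a`, `p ∤ b`. Then `a·x³ + b·y³ = z³` has a solution in `ℤₚ³` with not all
coordinates zero. -/
theorem stmt_0 (p : ℕ) [Fact p.Prime] (hp : 11 ≤ p) (a b : ℤ)
    (ha : ¬ (p : ℤ) ∣ a) (hb : ¬ (p : ℤ) ∣ b) :
    ∃ x y z : ℤ_[p], (x ≠ 0 ∨ y ≠ 0 ∨ z ≠ 0) ∧
      (a : ℤ_[p]) * x ^ 3 + (b : ℤ_[p]) * y ^ 3 = z ^ 3 := by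
  have hA : (a : ZMod p) ≠ 0 := by rwa [ne_eq, ZMod.intCast_zmod_eq_zero_iff_dvd]
  have hB : (b : ZMod p) ≠ 0 := by rwa [ne_eq, ZMod.intCast_zmod_eq_zero_iff_dvd]
  obtain ⟨x₀, y₀, hxy⟩ :=
    exists_mul_pow_three_add_mul_pow_three_eq_one (by rw [ZMod.card]; omega) hA hB
  obtain ⟨x, rfl⟩ := ZMod.ringHom_surjective PadicInt.toZMod x₀
  obtain ⟨y, rfl⟩ := ZMod.ringHom_surjective PadicInt.toZMod y₀
  have hc : PadicInt.toZMod ((a : ℤ_[p]) * x ^ 3 + (b : ℤ_[p]) * y ^ 3) = 1 := by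
    simpa using hxy
  have hp3 : ¬ p ∣ 3 := fun h => by have := Nat.le_of_dvd three_pos h; omega
  obtain ⟨z, hz⟩ := PadicInt.exists_pow_eq_of_toZMod_eq_one hp3 hc
  refine ⟨x, y, z, Or.inr (Or.inr ?_), hz.symm⟩
  rintro rfl
  simp [← hz] at hc
end

section
/- Let a, b be coprime squarefree integers with 3 ∤ ab, and let p be a prime with p ≡ 1 (mod 3) and p ∣ a. Then a·x³ + b·y³ = z³ has a nonzero solution in ℚₚ if and only if b is a cube modulo p. -/
/-!
Since `p ∣ a` and `gcd(a, b) = 1`, `p ∤ b`; write `a = p a'` with `p ∤ a'` (squarefreeness).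
Rescale a nonzero solution to a primitive one `(X, Y, Z)` over `ℤ_p`. If `p ∣ Y`, the equation
gives `p ∣ Z`, hence `p³ ∣ p a' X³` and so `p ∣ X`, contradicting primitivity. So `Y` is a unit
and reducing `b Y³ ≡ Z³` modulo `p` shows `b ≡ (Z / Y)³`. Conversely, as `p ≠ 3`, a cube root
of `b` modulo `p` is a simple root of `X³ - b` and lifts by Hensel's lemma to `w ∈ ℤ_p`,
giving the solution `(0, 1, w)`.
-/

namespace PadicInt

variable {p : ℕ} [Fact p.Prime]

instance instHenselianLocalRing : HenselianLocalRing ℤ_[p] where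
  is_henselian f hf a₀ h₁ h₂ := HenselianRing.is_henselian f hf a₀ h₁ (h₂.map _)

theorem toZMod_eq_zero_iff_dvd {x : ℤ_[p]} : toZMod x = 0 ↔ (p : ℤ_[p]) ∣ x := by
  rw [← RingHom.mem_ker, ker_toZMod, maximalIdeal_eq_span_p, Ideal.mem_span_singleton]

theorem natCast_dvd_intCast_iff {k : ℤ} : (p : ℤ_[p]) ∣ (k : ℤ_[p]) ↔ (p : ℤ) ∣ k := by
  rw [← toZMod_eq_zero_iff_dvd, map_intCast, ZMod.intCast_zmod_eq_zero_iff_dvd]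

open Polynomial in
theorem exists_pow_eq_of_toZMod_pow_eq {n : ℕ} (hn : (n : ZMod p) ≠ 0) {b : ℤ_[p]}
    {c : ZMod p} (hc0 : c ≠ 0) (hc : c ^ n = toZMod b) :
    ∃ w : ℤ_[p], w ^ n = b ∧ toZMod w = c := by
  have hn0 : n ≠ 0 := by rintro rfl; exact hn Nat.cast_zero
  have hensel := ((HenselianLocalRing.TFAE ℤ_[p]).out 0 2).mp instHenselianLocalRing
  obtain ⟨w, hw, hwc⟩ := @hensel (ZMod p) _ toZMod (ZMod.ringHom_surjective _)
    (X ^ n - C b) (monic_X_pow_sub_C b hn0) c (by simp [hc])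
    (by simp [derivative_X_pow, hn, hc0])
  exact ⟨w, by simpa [sub_eq_zero] using hw, hwc⟩

end PadicInt

theorem Padic.exists_primitive_scaling {p : ℕ} [Fact p.Prime] {x y z : ℚ_[p]}
    (h : x ≠ 0 ∨ y ≠ 0 ∨ z ≠ 0) :
    ∃ (t : ℚ_[p]) (X Y Z : ℤ_[p]), (X : ℚ_[p]) = t * x ∧ (Y : ℚ_[p]) = t * y ∧
      (Z : ℚ_[p]) = t * z ∧ ¬ ((p : ℤ_[p]) ∣ X ∧ (p : ℤ_[p]) ∣ Y ∧ (p : ℤ_[p]) ∣ Z) := by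
  set M := max (max ‖x‖ ‖y‖) ‖z‖ with hM
  obtain ⟨w, hw⟩ : ∃ w : ℚ_[p], ‖w‖ = M := by
    rcases max_choice (max ‖x‖ ‖y‖) ‖z‖ with h | h <;> rw [hM, h]
    · rcases max_choice ‖x‖ ‖y‖ with h' | h' <;> rw [h'] <;> exact ⟨_, rfl⟩
    · exact ⟨z, rfl⟩
  have hM0 : 0 < M := by
    rcases h with h | h | h <;> exact (norm_pos_iff.mpr h).trans_le (by simp [hM])
  have hscale : ∀ u : ℚ_[p], ‖w⁻¹ * u‖ = ‖u‖ / M := by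
    intro u; rw [norm_mul, norm_inv, hw, inv_mul_eq_div]
  have hle : ∀ u : ℚ_[p], ‖u‖ ≤ M → ‖w⁻¹ * u‖ ≤ 1 := fun u hu => by
    rw [hscale, div_le_one hM0]; exact hu
  have hlt : ∀ u : ℚ_[p], ∀ hu : ‖w⁻¹ * u‖ ≤ 1, (p : ℤ_[p]) ∣ ⟨_, hu⟩ → ‖u‖ < M :=
    fun u hu hdvd => by
      rw [← div_lt_one hM0, ← hscale]; exact (PadicInt.norm_lt_one_iff_dvd _).mpr hdvd
  refine ⟨w⁻¹, ⟨_, hle x (by simp [hM])⟩, ⟨_, hle y (by simp [hM])⟩, ⟨_, hle z (by simp [hM])⟩,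
    rfl, rfl, rfl, ?_⟩
  rintro ⟨hx, hy, hz⟩
  exact (max_lt (max_lt (hlt x _ hx) (hlt y _ hy)) (hlt z _ hz)).ne hM.symm

theorem Prime.not_dvd_of_mul_cube_add_cube_eq {R : Type*} [CommRing R] [IsDomain R]
    {π a b x y z : R} (hπ : Prime π) (ha : ¬ π ∣ a)
    (h : π * a * x ^ 3 + b * y ^ 3 = z ^ 3) (hprim : ¬ (π ∣ x ∧ π ∣ y ∧ π ∣ z)) :
    ¬ π ∣ y := by
  rintro ⟨y, rfl⟩
  have hz : π ∣ z := hπ.dvd_of_dvd_pow (n := 3) ⟨a * x ^ 3 + b * π ^ 2 * y ^ 3, by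
    rw [← h]; ring⟩
  obtain ⟨z, rfl⟩ := hz
  have hax : a * x ^ 3 = π * (π * (z ^ 3 - b * y ^ 3)) :=
    mul_left_cancel₀ hπ.ne_zero (by linear_combination h)
  have hx : π ∣ x := hπ.dvd_of_dvd_pow ((hπ.dvd_or_dvd ⟨_, hax⟩).resolve_left ha)
  exact hprim ⟨hx, dvd_mul_right _ _, dvd_mul_right _ _⟩

theorem stmt_7_general (a b : ℤ) (hcop : IsCoprime a b) (hsa : Squarefree a)
    (p : ℕ) [Fact p.Prime] (hp : p % 3 = 1) (hpa : (p : ℤ) ∣ a) :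
    (∃ x y z : ℚ_[p], (x ≠ 0 ∨ y ≠ 0 ∨ z ≠ 0) ∧
      (a : ℚ_[p]) * x ^ 3 + (b : ℚ_[p]) * y ^ 3 = z ^ 3) ↔
    (∃ c : ZMod p, c ^ 3 = (b : ZMod p)) := by
  have hp_unit : ¬ IsUnit (p : ℤ) := by
    rw [Int.isUnit_iff]; have := (Fact.out : p.Prime).two_le; omega
  have hpb : ¬ (p : ℤ) ∣ b := fun hpb => hp_unit (hcop.isUnit_of_dvd' hpa hpb)
  obtain ⟨a', rfl⟩ := hpa
  have ha' : ¬ (p : ℤ) ∣ a' := fun h => hp_unit (hsa _ (mul_dvd_mul_left _ h))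
  constructor
  · rintro ⟨x, y, z, hne, h⟩
    obtain ⟨t, X, Y, Z, hX, hY, hZ, hprim⟩ := Padic.exists_primitive_scaling hne
    have hXYZ : p * a' * X ^ 3 + b * Y ^ 3 = Z ^ 3 := PadicInt.ext <| by
      push_cast [hX, hY, hZ] at h ⊢; linear_combination t ^ 3 * h
    have hY0 : PadicInt.toZMod Y ≠ 0 := PadicInt.toZMod_eq_zero_iff_dvd.not.mpr <|
      PadicInt.prime_p.not_dvd_of_mul_cube_add_cube_eq
        (PadicInt.natCast_dvd_intCast_iff.not.mpr ha') hXYZ hprim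
    have hmod := congrArg PadicInt.toZMod hXYZ
    simp only [map_add, map_mul, map_pow, map_natCast, map_intCast, ZMod.natCast_self,
      zero_mul, zero_add] at hmod
    exact ⟨PadicInt.toZMod Z / PadicInt.toZMod Y, by field_simp; linear_combination -hmod⟩
  · rintro ⟨c, hc⟩
    have hb : (b : ZMod p) ≠ 0 := by rwa [Ne, ZMod.intCast_zmod_eq_zero_iff_dvd]
    have h3 : ((3 : ℕ) : ZMod p) ≠ 0 := by
      rw [Ne, ZMod.natCast_eq_zero_iff, Nat.prime_dvd_prime_iff_eq Fact.out Nat.prime_three]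
      omega
    obtain ⟨w, hw, -⟩ := PadicInt.exists_pow_eq_of_toZMod_pow_eq h3
      (by rintro rfl; exact hb (by simpa using hc.symm)) (hc.trans (map_intCast _ b).symm)
    exact ⟨0, 1, w, by simp, by simpa using (congrArg ((↑) : ℤ_[p] → ℚ_[p]) hw).symm⟩

/-- Let `a, b` be coprime squarefree integers with `3 ∤ ab`, and let `p`
be a prime with `p ≡ 1 (mod 3)` and `p ∣ a`. Then `a·x³ + b·y³ = z³` has a nonzero
solution in `ℚₚ` if and only if `b` is a cube modulo `p`. -/
theorem stmt_7 (a b : ℤ) (hcop : IsCoprime a b) (hsa : Squarefree a)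
    (hsb : Squarefree b) (hab : ¬ (3 : ℤ) ∣ a * b)
    (p : ℕ) [Fact p.Prime] (hp : p % 3 = 1) (hpa : (p : ℤ) ∣ a) :
    (∃ x y z : ℚ_[p], (x ≠ 0 ∨ y ≠ 0 ∨ z ≠ 0) ∧
      (a : ℚ_[p]) * x ^ 3 + (b : ℚ_[p]) * y ^ 3 = z ^ 3) ↔
    (∃ c : ZMod p, c ^ 3 = (b : ZMod p)) :=
  stmt_7_general a b hcop hsa p hp hpa
end
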